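/- arXiv:2407.12885 — 2 statements merged into one kernel-verified Lean document; each statement's English description precedes it below -/
import Mathlib

section
/- Let m be a positive integer and let x be a real number with 0 < x < π. Then ∑_{n=1}^∞ sin((2n-1)x)/(2n-1)^{2m} = ((-1)^m π^{2m-1}/(2·(2m-1)!)) · ( 2^{2m} ζ'(1-2m, 1 - x/(2π)) − 2^{2m} ζ'(1-2m, x/(2π)) − ζ'(1-2m, 1 - x/π) + ζ'(1-2m, x/π) ). -/
open Filter Topology Finset Real

/-- The Hurwitz zeta function `ζ(s, a)` for a real parameter `a > 0`: the meromorphic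
continuation in `s` of the series `∑ k : ℕ, (k + a) ^ (-s)` (convergent for `Re s > 1`).
For `0 < a ≤ 1` it is Mathlib's `HurwitzZeta.hurwitzZeta`; for larger `a` it is obtained
through the recurrence `ζ(s, a) = ζ(s, a + 1) + a ^ (-s)`. -/
noncomputable def hzeta (s : ℂ) (a : ℝ) : ℂ :=
  HurwitzZeta.hurwitzZeta (a : UnitAddCircle) s -
    ∑ j ∈ Finset.range (⌈a⌉₊ - 1), ((a : ℂ) - ((⌈a⌉₊ : ℂ) - 1) + j) ^ (-s)

/-!
Splitting off the even terms, the odd series is `S(x/2π) - 2^(-2m) S(x/π)`, where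
`S(a) = sinZeta a (2m) = ∑ sin(2πan)/n^(2m)`. The functional equation
`ζ_odd(a, 1 - s) = 2 (2π)^(-s) Γ(s) sin(πs/2) sinZeta a s` degenerates to `0 = 0` at `s = 2m`;
differentiating it there expresses `S(a)` through `ζ_odd'(a, 1 - 2m)`. Finally, for `0 < a < 1`,
`ζ(s, 1 - a) = ζ_even(a, s) - ζ_odd(a, s)` and `ζ(s, a) = ζ_even(a, s) + ζ_odd(a, s)`, so
`ζ'(1 - 2m, 1 - a) - ζ'(1 - 2m, a) = -2 ζ_odd'(a, 1 - 2m)`.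
-/

theorem HasSum.odd_of_even {E : Type*} [AddCommGroup E] [UniformSpace E] [IsUniformAddGroup E]
    [CompleteSpace E] [T2Space E] {f : ℕ → E} {a b : E} (hf : HasSum f a)
    (heven : HasSum (fun k ↦ f (2 * k)) b) : HasSum (fun k ↦ f (2 * k + 1)) (a - b) := by
  have hodd : Summable fun k ↦ f (2 * k + 1) :=
    hf.summable.comp_injective fun i j hij ↦ by simpa using hij
  rw [hf.unique (heven.even_add_odd hodd.hasSum), add_sub_cancel_left]
  exact hodd.hasSum

theorem DifferentiableAt.hasDerivAt_mul_of_eq_zero {𝕜 : Type*} [NontriviallyNormedField 𝕜]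
    {f g : 𝕜 → 𝕜} {g' x : 𝕜} (hf : DifferentiableAt 𝕜 f x) (hg : HasDerivAt g g' x)
    (hgx : g x = 0) :
    HasDerivAt (fun y ↦ f y * g y) (f x * g') x :=
  (hf.hasDerivAt.mul hg).congr_deriv (by rw [hgx, mul_zero, zero_add])

namespace HurwitzZeta

open Complex

theorem hasSum_sin_odd_mul_div_cpow (x : ℝ) {s : ℂ} (hs : 1 < s.re) :
    HasSum (fun n : ℕ ↦ (Real.sin ((2 * n + 1) * x) : ℂ) / (2 * (n : ℂ) + 1) ^ s)
      (sinZeta (x / (2 * π) : ℝ) s - 2 ^ (-s) * sinZeta (x / π : ℝ) s) := by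
  have heven : HasSum (fun k : ℕ ↦ (Real.sin (2 * π * (x / (2 * π)) * (2 * k : ℕ)) : ℂ) /
      ((2 * k : ℕ) : ℂ) ^ s) (2 ^ (-s) * sinZeta (x / π : ℝ) s) := by
    refine ((hasSum_nat_sinZeta (x / π) hs).mul_left (2 ^ (-s))).congr_fun fun k ↦ ?_
    rw [show ((2 * k : ℕ) : ℂ) = (2 : ℕ) * (k : ℂ) by push_cast; rfl,
      natCast_mul_natCast_cpow, cpow_neg]
    push_cast
    field_simp
  refine ((hasSum_nat_sinZeta (x / (2 * π)) hs).odd_of_even heven).congr_fun fun n ↦ ?_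
  rw [mul_div_cancel₀ _ (by positivity)]
  push_cast
  ring_nf

theorem hurwitzZetaOdd_one_sub_eventuallyEq (a : UnitAddCircle) {s₀ : ℂ} (hs₀ : 0 < s₀.re) :
    (fun s ↦ hurwitzZetaOdd a (1 - s)) =ᶠ[𝓝 s₀]
      fun s ↦ 2 * (2 * π) ^ (-s) * Complex.Gamma s * sinZeta a s * Complex.sin (π * s / 2) := by
  filter_upwards [(continuous_re.tendsto s₀).eventually (eventually_gt_nhds hs₀)] with s hs
  rw [hurwitzZetaOdd_one_sub a fun n h ↦ by
    simp only [h, neg_re, natCast_re, Left.neg_pos_iff] at hs; exact hs.not_ge n.cast_nonneg]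
  ring

/-- At `s = 2m` both sides of `hurwitzZetaOdd_one_sub` vanish, since `sin (π m) = 0`;
comparing their derivatives there gives this identity. -/
theorem deriv_hurwitzZetaOdd_one_sub_two_mul_nat (a : UnitAddCircle) {m : ℕ} (hm : m ≠ 0) :
    deriv (hurwitzZetaOdd a) (1 - 2 * m) =
      (-1) ^ (m + 1) * π * ((2 * m - 1).factorial : ℂ) / (2 * π) ^ (2 * m) *
        sinZeta a (2 * m) := by
  set s₀ : ℂ := 2 * m
  have hs₀ : 0 < s₀.re := by simp [s₀, Nat.pos_of_ne_zero hm]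
  have hs₀_nat : s₀ = (2 * m - 1 : ℕ) + 1 := by rw [Nat.cast_sub (by omega)]; push_cast; ring
  have harg : π * s₀ / 2 = m * π := by ring
  have hF :
      DifferentiableAt ℂ (fun s ↦ 2 * (2 * π) ^ (-s) * Complex.Gamma s * sinZeta a s) s₀ := by
    have h2π : (2 * π : ℂ) ≠ 0 := by simp [pi_ne_zero]
    have hΓ : DifferentiableAt ℂ Complex.Gamma s₀ := differentiableAt_Gamma _ fun n h ↦ by
      simp only [h, neg_re, natCast_re, Left.neg_pos_iff] at hs₀; exact hs₀.not_ge n.cast_nonneg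
    exact (((differentiableAt_const _).mul (differentiableAt_id.neg.const_cpow (Or.inl h2π))).mul
      hΓ).mul (differentiableAt_sinZeta a s₀)
  have hsin : Complex.sin (π * s₀ / 2) = 0 := by rw [harg, Complex.sin_nat_mul_pi]
  have hcos : Complex.cos (π * s₀ / 2) = (-1) ^ m := by
    rw [harg, ← ofReal_natCast, ← ofReal_mul, ← ofReal_cos, Real.cos_nat_mul_pi]
    push_cast; rfl
  have hsin' : HasDerivAt (fun s ↦ Complex.sin (π * s / 2)) (π / 2 * (-1) ^ m) s₀ := by
    refine ((Complex.hasDerivAt_sin _).comp s₀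
      (((hasDerivAt_id' s₀).const_mul (π : ℂ)).div_const 2)).congr_deriv ?_
    rw [hcos]; ring
  have hlhs : HasDerivAt (fun s ↦ hurwitzZetaOdd a (1 - s))
      (-deriv (hurwitzZetaOdd a) (1 - s₀)) s₀ :=
    (differentiable_hurwitzZetaOdd a _).hasDerivAt.comp_const_sub 1 s₀
  have key := hlhs.unique ((hurwitzZetaOdd_one_sub_eventuallyEq a hs₀).hasDerivAt_iff.2
    (hF.hasDerivAt_mul_of_eq_zero hsin' hsin))
  have hpow : (2 * π : ℂ) ^ (-s₀) = ((2 * (π : ℂ)) ^ (2 * m))⁻¹ := by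
    rw [cpow_neg, show s₀ = (2 * m : ℕ) by push_cast; rfl, cpow_natCast]
  rw [hpow, hs₀_nat, Complex.Gamma_nat_eq_factorial, ← hs₀_nat] at key
  linear_combination -key

theorem sinZeta_two_mul_nat (a : UnitAddCircle) {m : ℕ} (hm : m ≠ 0) :
    sinZeta a (2 * m) = (-1) ^ (m + 1) * 2 ^ (2 * m) * π ^ (2 * m - 1) / (2 * m - 1).factorial *
      deriv (hurwitzZetaOdd a) (1 - 2 * m) := by
  have hpow : (π : ℂ) ^ (2 * m) = π ^ (2 * m - 1) * π := by rw [← pow_succ]; congr 1; omega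
  have hsign : ((-1 : ℂ) ^ (m + 1)) ^ 2 = 1 := by rw [← pow_mul, pow_mul']; norm_num
  have hfac : ((2 * m - 1).factorial : ℂ) ≠ 0 := by exact_mod_cast (2 * m - 1).factorial_ne_zero
  have hπ : (π : ℂ) ≠ 0 := by exact_mod_cast pi_ne_zero
  rw [deriv_hurwitzZetaOdd_one_sub_two_mul_nat a hm, mul_pow, hpow]
  field_simp
  rw [hsign, mul_one]

theorem deriv_hurwitzZeta_neg_sub_deriv_hurwitzZeta (a : UnitAddCircle) {s : ℂ} (hs : s ≠ 1) :
    deriv (hurwitzZeta (-a)) s - deriv (hurwitzZeta a) s = -2 * deriv (hurwitzZetaOdd a) s := by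
  have hsplit (b : UnitAddCircle) : deriv (hurwitzZeta b) s =
      deriv (hurwitzZetaEven b) s + deriv (hurwitzZetaOdd b) s :=
    deriv_add (differentiableAt_hurwitzZetaEven b hs) (differentiable_hurwitzZetaOdd b s)
  have hEven : hurwitzZetaEven (-a) = hurwitzZetaEven a := funext (hurwitzZetaEven_neg a)
  have hOdd : hurwitzZetaOdd (-a) = fun s ↦ -hurwitzZetaOdd a s := funext (hurwitzZetaOdd_neg a)
  rw [hsplit, hsplit, hEven, hOdd, deriv.fun_neg]
  ring

end HurwitzZeta

open HurwitzZeta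

theorem hzeta_eq_hurwitzZeta {a : ℝ} (ha₀ : 0 < a) (ha₁ : a ≤ 1) (s : ℂ) :
    hzeta s a = hurwitzZeta a s := by
  rw [hzeta, (Nat.ceil_eq_iff one_ne_zero).mpr (by norm_num; exact ⟨ha₀, ha₁⟩)]
  simp

theorem deriv_hzeta_one_sub {a : ℝ} (ha₀ : 0 < a) (ha₁ : a < 1) {s : ℂ} (hs : s ≠ 1) :
    deriv (fun s ↦ hzeta s (1 - a)) s =
      deriv (fun s ↦ hzeta s a) s - 2 * deriv (hurwitzZetaOdd a) s := by
  have hneg : ((1 - a : ℝ) : UnitAddCircle) = -a := by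
    rw [AddCircle.coe_sub, AddCircle.coe_period, zero_sub]
  simp_rw [hzeta_eq_hurwitzZeta (sub_pos.2 ha₁) (by linarith), hzeta_eq_hurwitzZeta ha₀ ha₁.le,
    hneg]
  linear_combination deriv_hurwitzZeta_neg_sub_deriv_hurwitzZeta _ hs

/-- For a positive integer `m` and `0 < x < π`,
`∑_{n=1}^∞ sin((2n-1)x)/(2n-1)^(2m) = ((-1)^m π^(2m-1)/(2·(2m-1)!)) ·
  (2^(2m) ζ'(1-2m, 1 - x/(2π)) - 2^(2m) ζ'(1-2m, x/(2π))
   - ζ'(1-2m, 1 - x/π) + ζ'(1-2m, x/π))`. -/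
theorem odd_sin_series_even_exponent_closed_form (m : ℕ) (hm : 0 < m)
    (x : ℝ) (hx0 : 0 < x) (hx1 : x < π) :
    Filter.Tendsto
      (fun N : ℕ => ∑ n ∈ Finset.range N,
        (Real.sin ((2 * n + 1) * x) : ℂ) / (2 * (n : ℂ) + 1) ^ (2 * m))
      Filter.atTop
      (𝓝 ((-1) ^ m * (π : ℂ) ^ (2 * m - 1) / (2 * (Nat.factorial (2 * m - 1) : ℂ)) *
        (2 ^ (2 * m) * deriv (fun s => hzeta s (1 - x / (2 * π))) (1 - 2 * (m : ℂ)) -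
          2 ^ (2 * m) * deriv (fun s => hzeta s (x / (2 * π))) (1 - 2 * (m : ℂ)) -
          deriv (fun s => hzeta s (1 - x / π)) (1 - 2 * (m : ℂ)) +
          deriv (fun s => hzeta s (x / π)) (1 - 2 * (m : ℂ))))) := by
  have hs : 1 < ((2 * m : ℕ) : ℂ).re := by norm_cast; omega
  have hs1 : 1 - 2 * (m : ℂ) ≠ 1 := by simp [hm.ne']
  have hsum := (hasSum_sin_odd_mul_div_cpow x hs).tendsto_sum_nat
  simp only [Complex.cpow_natCast, Complex.cpow_neg] at hsum
  convert hsum using 2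
  push_cast
  rw [deriv_hzeta_one_sub (by positivity) (by rw [div_lt_one (by positivity)]; linarith) hs1,
    deriv_hzeta_one_sub (by positivity) ((div_lt_one pi_pos).2 hx1) hs1,
    sinZeta_two_mul_nat _ hm.ne', sinZeta_two_mul_nat _ hm.ne']
  field_simp
  ring
end

section
/- For every positive integer j, the derivative of the Dirichlet beta function at the negative odd integer 1−2j satisfies β'(1−2j) = (−1)^{j+1} · (π/2)^{1−2j} · (2j−1)! · β(2j). -/
/-!
β is the `ZMod.LFunction` of the odd function χ₄, whose discrete Fourier transform is `-2i χ₄`,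
so the functional equation of `ZMod.LFunction` becomes
`β(1 - s) = (2/π)^s Γ(s) sin(πs/2) β(s)` away from the poles of Γ.
At `s = 2j` the sine factor vanishes with derivative `(-1)^j π/2`, so differentiating the product
leaves the single term `β'(1 - 2j) = (-1)^(j+1) (π/2) (2/π)^(2j) Γ(2j) β(2j)`.
-/

open Real

/-- The Dirichlet beta function: the entire continuation of
`∑_{n=1}^∞ (-1)^(n-1) (2n-1)^(-s)`, realised as the L-function of the nontrivial
Dirichlet character mod 4. -/
noncomputable def dirichletBeta (s : ℂ) : ℂ :=
  DirichletCharacter.LFunction (ZMod.χ₄.ringHomComp (Int.castRingHom ℂ)) s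

open Complex ZMod

namespace ZMod

variable {N : ℕ} [NeZero N]

lemma LFunction_smul (c : ℂ) (Φ : ZMod N → ℂ) (s : ℂ) :
    LFunction (c • Φ) s = c * LFunction Φ s := by
  simp only [LFunction, Pi.smul_apply, smul_eq_mul, Finset.mul_sum, mul_assoc, mul_left_comm c]

lemma LFunction_neg (Φ : ZMod N → ℂ) (s : ℂ) : LFunction (-Φ) s = -LFunction Φ s := by
  simpa using LFunction_smul (-1) Φ s

theorem LFunction_one_sub_of_odd {Φ : ZMod N → ℂ} (hΦ : Φ.Odd) {s : ℂ}
    (hs : ∀ n : ℕ, s ≠ -n) :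
    LFunction Φ (1 - s) = N ^ (s - 1) * (2 * π) ^ (-s) * Gamma s *
      (2 * I * sin (π * s / 2)) * LFunction (𝓕 Φ) s := by
  have hneg : (fun x ↦ Φ (-x)) = -Φ := funext hΦ
  have two_I_sin : 2 * I * sin (π * s / 2) = cexp (π * I * s / 2) - cexp (-π * I * s / 2) := by
    rw [mul_assoc, mul_comm I, ← mul_assoc, two_sin]
    ring_nf
    simp [I_sq]
  rw [LFunction_one_sub Φ hs (.inl hΦ.map_zero), hneg, map_neg, LFunction_neg, two_I_sin]
  ring

lemma stdAddChar_four (k : ZMod 4) : stdAddChar k = I ^ k.val := by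
  rw [stdAddChar_apply, toCircle_apply,
    show 2 * (π : ℂ) * I * k.val / (4 : ℕ) = k.val * (π / 2 * I) by push_cast; ring,
    Complex.exp_nat_mul, exp_pi_div_two_mul_I]

end ZMod

noncomputable def χ₄ℂ : DirichletCharacter ℂ 4 := χ₄.ringHomComp (Int.castRingHom ℂ)

lemma χ₄ℂ_apply (k : ZMod 4) : χ₄ℂ k = χ₄ k := rfl

lemma χ₄ℂ_odd : χ₄ℂ.Odd := by
  show χ₄ℂ (-1) = -1
  simp [χ₄ℂ_apply, show (-1 : ZMod 4) = 3 by decide]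

lemma χ₄ℂ_ne_one : χ₄ℂ ≠ 1 := by
  intro h
  refine DirichletCharacter.Odd.not_even _ χ₄ℂ_odd ?_
  rw [h]
  exact MulChar.one_apply isUnit_one.neg

lemma dft_χ₄ℂ : 𝓕 χ₄ℂ = (-2 * I) • ⇑χ₄ℂ := by
  have sum_four (f : ZMod 4 → ℂ) : ∑ j, f j = f 0 + f 1 + f 2 + f 3 := Fin.sum_univ_four f
  have four_cases : ∀ k : ZMod 4, k = 0 ∨ k = 1 ∨ k = 2 ∨ k = 3 := by decide
  ext k
  have neg_three_mul : -(3 * k) = k := by revert k; decide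
  have hdft : 𝓕 χ₄ℂ k = stdAddChar (-k) - stdAddChar k := by
    simp [dft_apply, sum_four, χ₄ℂ_apply, neg_three_mul, sub_eq_add_neg]
  rw [hdft, Pi.smul_apply, smul_eq_mul, stdAddChar_four, stdAddChar_four, χ₄ℂ_apply]
  obtain rfl | rfl | rfl | rfl := four_cases k <;>
    simp [neg_val', val_ofNat, val_one_eq_one_mod, two_mul, sub_eq_add_neg]

lemma dirichletBeta_eq_LFunction : dirichletBeta = LFunction χ₄ℂ := rfl

lemma differentiable_dirichletBeta : Differentiable ℂ dirichletBeta :=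
  DirichletCharacter.differentiable_LFunction χ₄ℂ_ne_one

lemma two_div_pi_cpow (s : ℂ) : (2 / π : ℂ) ^ s = 4 ^ s * (2 * π) ^ (-s) := by
  have h := div_cpow_ofReal_nonneg (a := 4) (b := 2 * π) (by norm_num) (by positivity) s
  push_cast at h
  rw [cpow_neg, ← div_eq_mul_inv, ← h]
  congr 1
  field_simp
  ring

theorem dirichletBeta_one_sub {s : ℂ} (hs : ∀ n : ℕ, s ≠ -n) :
    dirichletBeta (1 - s) = (2 / π) ^ s * Gamma s * sin (π * s / 2) * dirichletBeta s := by
  rw [dirichletBeta_eq_LFunction, LFunction_one_sub_of_odd χ₄ℂ_odd.to_fun hs, dft_χ₄ℂ,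
    LFunction_smul, two_div_pi_cpow]
  push_cast
  rw [cpow_sub _ _ (by norm_num), cpow_one]
  ring_nf
  simp [I_sq]

lemma Complex.ne_neg_natCast_of_re_pos {s : ℂ} (hs : 0 < s.re) (n : ℕ) : s ≠ -n := by
  rintro rfl
  simp at hs
  linarith [n.cast_nonneg (α := ℝ)]

theorem hasDerivAt_dirichletBeta_one_sub_two_mul {j : ℕ} (hj : 0 < j) :
    HasDerivAt dirichletBeta ((-1) ^ (j + 1) * (π / 2) *
      ((2 / π) ^ (2 * j : ℂ) * Gamma (2 * j : ℂ) * dirichletBeta (2 * j))) (1 - 2 * j) := by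
  set s₀ : ℂ := 2 * j
  have hs₀ : 0 < s₀.re := by simp [s₀, hj]
  have hG : DifferentiableAt ℂ (fun s : ℂ ↦ (2 / π : ℂ) ^ s * Gamma s * dirichletBeta s) s₀ := by
    refine ((differentiableAt_id.const_cpow (.inl ?_)).mul
      (differentiableAt_Gamma _ (ne_neg_natCast_of_re_pos hs₀))).mul
      (differentiable_dirichletBeta s₀)
    simp [Real.pi_ne_zero]
  have half_angle : π * s₀ / 2 = j * π := by ring
  have hsin₀ : sin (π * s₀ / 2) = 0 := by rw [half_angle, Complex.sin_nat_mul_pi]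
  have hsin : HasDerivAt (fun s : ℂ ↦ sin (π * s / 2)) ((-1) ^ j * (π / 2)) s₀ := by
    have hcos : cos (j * π : ℂ) = (-1) ^ j := by exact_mod_cast Real.cos_nat_mul_pi j
    simpa [half_angle, hcos] using ((hasDerivAt_id s₀).const_mul (π : ℂ) |>.div_const 2).csin
  have hfe : (fun s ↦ dirichletBeta (1 - s)) =ᶠ[nhds s₀]
      fun s : ℂ ↦ (2 / π : ℂ) ^ s * Gamma s * dirichletBeta s * sin (π * s / 2) := by
    filter_upwards [(continuous_re.isOpen_preimage _ isOpen_Ioi).mem_nhds hs₀] with s hs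
    rw [dirichletBeta_one_sub (ne_neg_natCast_of_re_pos hs)]
    ring
  have hβ := (hG.hasDerivAt.mul hsin).congr_of_eventuallyEq hfe
  rw [hsin₀, mul_zero, zero_add] at hβ
  have := HasDerivAt.comp_const_sub 1 (1 - s₀) (by rwa [sub_sub_cancel])
  simp only [sub_sub_cancel] at this
  exact this.congr_deriv (by ring)

/-- For every positive integer `j`,
`β'(1-2j) = (-1)^(j+1) (π/2)^(1-2j) (2j-1)! β(2j)`. -/
theorem dirichletBeta_deriv_neg_odd (j : ℕ) (hj : 0 < j) :
    deriv dirichletBeta (1 - 2 * (j : ℂ)) =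
      (-1) ^ (j + 1) * ((π : ℂ) / 2) ^ (1 - 2 * (j : ℤ)) * (Nat.factorial (2 * j - 1) : ℂ) *
        dirichletBeta (2 * (j : ℂ)) := by
  have hΓ : Gamma (2 * j : ℂ) = (2 * j - 1).factorial := by
    rw [← Complex.Gamma_nat_eq_factorial, Nat.cast_sub (by omega)]
    push_cast
    ring_nf
  have hcpow : (2 / π : ℂ) ^ (2 * j : ℂ) = ((π / 2 : ℂ) ^ (2 * j))⁻¹ := by
    rw [← Nat.cast_ofNat, ← Nat.cast_mul, cpow_natCast, ← inv_div, inv_pow]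
  have hzpow : (π / 2 : ℂ) ^ (1 - 2 * (j : ℤ)) = π / 2 * ((π / 2 : ℂ) ^ (2 * j))⁻¹ := by
    rw [zpow_sub₀ (by simp [Real.pi_ne_zero]), zpow_one, div_eq_mul_inv _ ((π / 2 : ℂ) ^ _)]
    norm_cast
  rw [(hasDerivAt_dirichletBeta_one_sub_two_mul hj).deriv, hΓ, hcpow, hzpow]
  ring
end
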